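/- arXiv:1302.3623 — 3 statements merged into one kernel-verified Lean document; each statement's English description precedes it below -/
import Mathlib

section
/- Let T be a bounded nonempty closed subset of ℝ with minimum a, and define the forward jump σ(t) = inf{s ∈ T : s > t} (with inf ∅ = max T) and backward jump ρ(t) = sup{s ∈ T : s < t} (with sup ∅ = a). Then for any t ∈ T with t > σ(a) (equivalently t ∈ T_κ), σ is continuous at t (as a function on T) if and only if σ(ρ(t)) = t. -/
open Set Filter Topology RealInnerProductSpace

open Classical in
/-- Forward jump operator of a time scale `T`, with convention `inf ∅ = sSup T`. -/
noncomputable def tsSigma (T : Set ℝ) (t : ℝ) : ℝ :=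
  if ({s | s ∈ T ∧ t < s}).Nonempty then sInf {s | s ∈ T ∧ t < s} else sSup T

open Classical in
/-- Backward jump operator of a time scale `T`, with convention `sup ∅ = sInf T`. -/
noncomputable def tsRho (T : Set ℝ) (t : ℝ) : ℝ :=
  if ({s | s ∈ T ∧ s < t}).Nonempty then sSup {s | s ∈ T ∧ s < t} else sInf T

/-- `u` is Δ-differentiable at `t` (w.r.t. the time scale `T`) with derivative `L`. -/
def HasDeltaDerivAt {E : Type*} [NormedAddCommGroup E] [NormedSpace ℝ E]
    (T : Set ℝ) (u : ℝ → E) (t : ℝ) (L : E) : Prop :=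
  Filter.Tendsto (fun s => (tsSigma T t - s)⁻¹ • (u (tsSigma T t) - u s))
    (nhdsWithin t (T \ {tsSigma T t})) (nhds L)

/-- `u` is ∇-differentiable at `t` (w.r.t. the time scale `T`) with derivative `L`. -/
def HasNablaDerivAt {E : Type*} [NormedAddCommGroup E] [NormedSpace ℝ E]
    (T : Set ℝ) (u : ℝ → E) (t : ℝ) (L : E) : Prop :=
  Filter.Tendsto (fun s => (s - tsRho T t)⁻¹ • (u s - u (tsRho T t)))
    (nhdsWithin t (T \ {tsRho T t})) (nhds L)

/-- `T^κ = {t ∈ T : t ≤ ρ(max T)}`. -/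
def Tup (T : Set ℝ) : Set ℝ := {t | t ∈ T ∧ t ≤ tsRho T (sSup T)}

/-- `T_κ = {t ∈ T : σ(min T) ≤ t}`. -/
def Tlow (T : Set ℝ) : Set ℝ := {t | t ∈ T ∧ tsSigma T (sInf T) ≤ t}

/-! On `T ∩ [t, ∞)` the forward jump is continuous at `t` for every `t ∈ T`: it is monotone on `T`,
and `σ x ≤ s` as soon as `x < s ∈ T`. On `T ∩ (-∞, t)` it is squeezed as `x ≤ σ x ≤ t`.
If `t` is left-scattered (`ρ t < t`), then `t` is isolated from the left and `σ (ρ t) = t`,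
so both sides hold. If `t` is left-dense (`ρ t = t`), then `σ x → t` as `x ↑ t` in `T`,
so continuity at `t` amounts to `σ t = t`, which is `σ (ρ t) = t`. -/

section TimeScale

variable {T : Set ℝ} {s t x y : ℝ}

theorem le_tsSigma (hx : x ∈ T) : x ≤ tsSigma T x := by
  unfold tsSigma
  split_ifs with hne
  · exact le_csInf hne fun s hs => hs.2.le
  · exact le_csSup ⟨x, fun s hs => not_lt.1 fun h => hne ⟨s, hs, h⟩⟩ hx

theorem tsSigma_le (hs : s ∈ T) (hxs : x < s) : tsSigma T x ≤ s := by
  unfold tsSigma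
  rw [if_pos ⟨s, hs, hxs⟩]
  exact csInf_le ⟨x, fun _ h => h.2.le⟩ ⟨hs, hxs⟩

theorem tsSigma_le_tsSigma (hy : y ∈ T) (hxy : x ≤ y) :
    tsSigma T x ≤ tsSigma T y := by
  rcases hxy.eq_or_lt with rfl | hlt
  · rfl
  · exact (tsSigma_le hy hlt).trans (le_tsSigma hy)

theorem nonempty_inter_Iio_of_tsSigma_lt (ht : t ∈ T) (h : tsSigma T x < t) :
    (T ∩ Iio t).Nonempty := by
  unfold tsSigma at h
  split_ifs at h with hne
  · obtain ⟨s, hs, hst⟩ := exists_lt_of_csInf_lt hne h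
    exact ⟨s, hs.1, hst⟩
  · exact absurd (le_csSup ⟨x, fun s hs => not_lt.1 fun h => hne ⟨s, hs, h⟩⟩ ht) h.not_ge

theorem tsRho_eq_sSup (h : (T ∩ Iio t).Nonempty) : tsRho T t = sSup (T ∩ Iio t) :=
  if_pos h

theorem le_tsRho (hs : s ∈ T) (hst : s < t) : s ≤ tsRho T t := by
  rw [tsRho_eq_sSup ⟨s, hs, hst⟩]
  exact le_csSup ⟨t, fun _ h => h.2.le⟩ ⟨hs, hst⟩

theorem tsRho_le (h : (T ∩ Iio t).Nonempty) : tsRho T t ≤ t := by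
  rw [tsRho_eq_sSup h]
  exact csSup_le h fun _ hs => hs.2.le

theorem tsSigma_tsRho_of_tsRho_lt (ht : t ∈ T) (h : tsRho T t < t) :
    tsSigma T (tsRho T t) = t := by
  refine le_antisymm (tsSigma_le ht h) ?_
  unfold tsSigma
  rw [if_pos ⟨t, ht, h⟩]
  refine le_csInf ⟨t, ht, h⟩ fun s ⟨hs, hrs⟩ => not_lt.1 fun hst => ?_
  exact (le_tsRho hs hst).not_gt hrs

theorem continuousWithinAt_tsSigma_Ici (ht : t ∈ T) :
    ContinuousWithinAt (tsSigma T) (T ∩ Ici t) t := by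
  refine tendsto_order.2 ⟨fun a ha => ?_, fun b hb => ?_⟩
  · filter_upwards [self_mem_nhdsWithin] with x ⟨hx, htx⟩
    exact ha.trans_le (tsSigma_le_tsSigma hx htx)
  by_cases hgap : ∃ s ∈ T, t < s ∧ s < b
  · obtain ⟨s, hs, hts, hsb⟩ := hgap
    filter_upwards [nhdsWithin_le_nhds (Iio_mem_nhds hts)] with x hxs
    exact (tsSigma_le hs hxs).trans_lt hsb
  · push Not at hgap
    have htb : t < b := (le_tsSigma ht).trans_lt hb
    filter_upwards [self_mem_nhdsWithin, nhdsWithin_le_nhds (Iio_mem_nhds htb)]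
      with x ⟨hx, htx⟩ hxb
    obtain rfl : x = t := le_antisymm (not_lt.1 fun h => (hgap x hx h).not_gt hxb) htx
    exact hb

theorem continuousWithinAt_tsSigma_iff_Iio (ht : t ∈ T) :
    ContinuousWithinAt (tsSigma T) T t ↔ ContinuousWithinAt (tsSigma T) (T ∩ Iio t) t := by
  have hsplit : T ∩ Iio t ∪ T ∩ Ici t = T := by
    rw [← inter_union_distrib_left, Iio_union_Ici, inter_univ]
  have h := continuousWithinAt_union (f := tsSigma T) (s := T ∩ Iio t) (t := T ∩ Ici t) (x := t)
  rwa [hsplit, and_iff_left (continuousWithinAt_tsSigma_Ici ht)] at h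

theorem tendsto_tsSigma_nhdsWithin_Iio (ht : t ∈ T) :
    Tendsto (tsSigma T) (𝓝[T ∩ Iio t] t) (𝓝 t) :=
  tendsto_of_tendsto_of_tendsto_of_le_of_le' (tendsto_nhdsWithin_of_tendsto_nhds tendsto_id)
    tendsto_const_nhds (eventually_nhdsWithin_of_forall fun _ hx => le_tsSigma hx.1)
    (eventually_nhdsWithin_of_forall fun _ hx => tsSigma_le ht hx.2)

theorem nhdsWithin_Iio_eq_bot_of_tsRho_lt (h : tsRho T t < t) : 𝓝[T ∩ Iio t] t = ⊥ := by
  refine notMem_closure_iff_nhdsWithin_eq_bot.1 fun hcl => h.not_ge ?_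
  have hsub : T ∩ Iio t ⊆ Iic (tsRho T t) := fun s hs => le_tsRho hs.1 hs.2
  exact closure_minimal hsub isClosed_Iic hcl

theorem nhdsWithin_Iio_neBot_of_tsRho_eq (hne : (T ∩ Iio t).Nonempty) (h : tsRho T t = t) :
    (𝓝[T ∩ Iio t] t).NeBot := by
  have hcl := csSup_mem_closure hne ⟨t, fun _ hs => hs.2.le⟩
  rw [← tsRho_eq_sSup hne, h] at hcl
  exact mem_closure_iff_nhdsWithin_neBot.1 hcl

end TimeScale

theorem stmt_0_general (T : Set ℝ) (t : ℝ) (ht : t ∈ T) (htk : tsSigma T (sInf T) < t) :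
    ContinuousWithinAt (tsSigma T) T t ↔ tsSigma T (tsRho T t) = t := by
  have hleft := nonempty_inter_Iio_of_tsSigma_lt ht htk
  rw [continuousWithinAt_tsSigma_iff_Iio ht]
  rcases (tsRho_le hleft).lt_or_eq with hlt | heq
  · simp only [ContinuousWithinAt, nhdsWithin_Iio_eq_bot_of_tsRho_lt hlt, tendsto_bot,
      tsSigma_tsRho_of_tsRho_lt ht hlt]
  · have := nhdsWithin_Iio_neBot_of_tsRho_eq hleft heq
    rw [heq]
    exact ⟨fun h => tendsto_nhds_unique h (tendsto_tsSigma_nhdsWithin_Iio ht),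
      fun h => by rw [ContinuousWithinAt, h]; exact tendsto_tsSigma_nhdsWithin_Iio ht⟩

/-- For `t ∈ T` with `t > σ(min T)`, the forward jump `σ` is continuous at `t`
(as a function on `T`) iff `σ(ρ(t)) = t`. -/
theorem stmt_0 (T : Set ℝ) (hne : T.Nonempty) (hbd : Bornology.IsBounded T) (hcl : IsClosed T)
    (t : ℝ) (ht : t ∈ T) (htk : tsSigma T (sInf T) < t) :
    ContinuousWithinAt (tsSigma T) T t ↔ tsSigma T (tsRho T t) = t :=
  stmt_0_general T t ht htk
end

section
/- Let T be a bounded time scale. The forward jump operator σ is continuous on T (in the subspace topology) if and only if no point of T other than a = min T is both right-scattered and left-dense; that is, (RS ∩ LD) \ {a} = ∅. -/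
open Set Filter Topology RealInnerProductSpace

/-!
`σ` is upper semicontinuous on all of `ℝ`, and `t ≤ σ t` on `T`, so `σ` is continuous at every
right-dense point of `T`. A right-scattered point that is `min T` or left-scattered is isolated in
`T`, where continuity is automatic. Conversely, at a right-scattered, left-dense point
`t ≠ min T`, the points `s ∈ T` with `s < t` accumulate at `t` and all satisfy `σ s ≤ t < σ t`.
-/

section JumpOperators

variable {T : Set ℝ} {s t u : ℝ}

theorem tsSigma_le_of_lt (hB : BddBelow T) (hu : u ∈ T) (htu : t < u) : tsSigma T t ≤ u := by
  rw [tsSigma, if_pos ⟨u, hu, htu⟩]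
  exact csInf_le (hB.mono fun _ hs => hs.1) ⟨hu, htu⟩

theorem le_tsSigma_s3 (hA : BddAbove T) (ht : t ∈ T) : t ≤ tsSigma T t := by
  rw [tsSigma]
  split_ifs with h
  · exact le_csInf h fun _ hs => hs.2.le
  · exact le_csSup hA ht

theorem tsSigma_le_sSup (hA : BddAbove T) (hB : BddBelow T) : tsSigma T t ≤ sSup T := by
  rw [tsSigma]
  split_ifs with h
  · obtain ⟨w, hw⟩ := h
    exact (csInf_le (hB.mono fun _ hs => hs.1) hw).trans (le_csSup hA hw.1)
  · exact le_rfl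

theorem le_tsRho_of_lt (hA : BddAbove T) (hs : s ∈ T) (hst : s < t) : s ≤ tsRho T t := by
  rw [tsRho, if_pos ⟨s, hs, hst⟩]
  exact le_csSup (hA.mono fun _ hs => hs.1) ⟨hs, hst⟩

theorem tsRho_le_s3 (hB : BddBelow T) (ht : t ∈ T) : tsRho T t ≤ t := by
  rw [tsRho]
  split_ifs with h
  · exact csSup_le h fun _ hs => hs.2.le
  · exact csInf_le hB ht

theorem mem_closure_of_tsRho_eq (hA : BddAbove T) (hρ : tsRho T t = t) (hmin : t ≠ sInf T) :
    t ∈ closure {s | s ∈ T ∧ s < t} := by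
  rw [tsRho] at hρ
  split_ifs at hρ with h
  · have hmem := csSup_mem_closure h (hA.mono fun _ hs => hs.1)
    rwa [hρ] at hmem
  · exact absurd hρ.symm hmin

theorem upperSemicontinuous_tsSigma (hA : BddAbove T) (hB : BddBelow T) :
    UpperSemicontinuous (tsSigma T) := by
  intro t u hu
  by_cases h : ({s | s ∈ T ∧ t < s}).Nonempty
  · rw [tsSigma, if_pos h] at hu
    obtain ⟨w, ⟨hw, htw⟩, hwu⟩ := exists_lt_of_csInf_lt h hu
    filter_upwards [Iio_mem_nhds htw] with s hs
    exact (tsSigma_le_of_lt hB hw hs).trans_lt hwu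
  · rw [tsSigma, if_neg h] at hu
    exact Eventually.of_forall fun _ => (tsSigma_le_sSup hA hB).trans_lt hu

theorem continuousWithinAt_tsSigma_of_eq (hA : BddAbove T) (hB : BddBelow T)
    (hσ : tsSigma T t = t) : ContinuousWithinAt (tsSigma T) T t := by
  refine continuousWithinAt_iff_lower_upperSemicontinuousWithinAt.2
    ⟨fun y hy => ?_, UpperSemicontinuousAt.upperSemicontinuousWithinAt T
      (upperSemicontinuous_tsSigma hA hB t)⟩
  replace hy : y < t := hσ ▸ hy
  filter_upwards [nhdsWithin_le_nhds (Ioi_mem_nhds hy), self_mem_nhdsWithin] with s hys hs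
  exact hys.trans_le (le_tsSigma_s3 hA hs)

theorem singleton_mem_nhdsWithin_of_tsSigma_gt (hA : BddAbove T) (hB : BddBelow T) (ht : t ∈ T)
    (hσ : t < tsSigma T t) (hleft : t = sInf T ∨ tsRho T t < t) : {t} ∈ 𝓝[T] t := by
  obtain ⟨l, hlt, hgap⟩ : ∃ l < t, ∀ s ∈ T, s < t → s ≤ l := by
    rcases hleft with hmin | hρ
    · exact ⟨t - 1, by linarith, fun s hs hst => absurd (hmin ▸ csInf_le hB hs) hst.not_ge⟩
    · exact ⟨tsRho T t, hρ, fun s hs hst => le_tsRho_of_lt hA hs hst⟩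
  refine mem_nhdsWithin.2 ⟨Ioo l (tsSigma T t), isOpen_Ioo, ⟨hlt, hσ⟩, ?_⟩
  rintro s ⟨⟨hls, hsσ⟩, hs⟩
  rcases lt_trichotomy s t with hst | rfl | hts
  · exact absurd (hgap s hs hst) hls.not_ge
  · rfl
  · exact absurd (tsSigma_le_of_lt hB hs hts) hsσ.not_ge

end JumpOperators

theorem stmt_3_general (T : Set ℝ) (hbd : Bornology.IsBounded T) :
    ContinuousOn (tsSigma T) T ↔
      {t | t ∈ T ∧ t < tsSigma T t ∧ tsRho T t = t} \ {sInf T} = ∅ := by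
  have hA := hbd.bddAbove
  have hB := hbd.bddBelow
  rw [sdiff_eq_empty, subset_singleton_iff]
  constructor
  · rintro hcont t ⟨ht, hσ, hρ⟩
    by_contra hmin
    have hσ_le : tsSigma T t ≤ t :=
      ContinuousWithinAt.closure_le (mem_closure_of_tsRho_eq hA hρ hmin)
        ((hcont t ht).mono fun _ hs => hs.1) continuousWithinAt_const
        fun s hs => tsSigma_le_of_lt hB ht hs.2
    exact hσ.not_ge hσ_le
  · intro hcond t ht
    rcases (le_tsSigma_s3 hA ht).eq_or_lt with hσ | hσ
    · exact continuousWithinAt_tsSigma_of_eq hA hB hσ.symm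
    · have hleft : t = sInf T ∨ tsRho T t < t := or_iff_not_imp_left.2 fun hmin =>
        (tsRho_le_s3 hB ht).lt_of_ne fun hρ => hmin (hcond t ⟨ht, hσ, hρ⟩)
      exact continuousWithinAt_singleton.mono_of_mem_nhdsWithin
        (singleton_mem_nhdsWithin_of_tsSigma_gt hA hB ht hσ hleft)

/-- `σ` is continuous on `T` iff no point of `T` other than `min T` is
both right-scattered and left-dense. -/
theorem stmt_3 (T : Set ℝ) (hne : T.Nonempty) (hbd : Bornology.IsBounded T) (hcl : IsClosed T) :
    ContinuousOn (tsSigma T) T ↔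
      {t | t ∈ T ∧ t < tsSigma T t ∧ tsRho T t = t} \ {sInf T} = ∅ :=
  stmt_3_general T hbd
end

section
/- Let T = {0} ∪ {1/k! : k ∈ ℕ}. Then σ is not ∇-differentiable at 0; i.e., the limit of σ(s)/s as s → 0 along T \ {0} does not exist in ℝ (it tends to +∞). -/
open Set Filter Topology RealInnerProductSpace

/-!
As `0 = min T` and `0 = inf (T ∩ (0, ∞))`, we have `ρ(0) = σ(0) = 0`, so the ∇-difference
quotient of `σ` at `0` is `σ(s)/s`. Near `0` the points of `T \ {0}` are exactly the tail of the sequence `1/k!`,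
and `σ(1/(k+1)!) = 1/k!`, so along them `σ(s)/s = k + 1 → ∞`.
-/

open Nat

theorem nhdsWithin_range_diff_eq_map_atTop {X : Type*} [TopologicalSpace X] [T1Space X]
    {g : ℕ → X} {a : X} (hg : Tendsto g atTop (𝓝 a)) (hne : ∀ k, g k ≠ a) :
    𝓝[range g \ {a}] a = map g atTop := by
  refine le_antisymm (fun S hS => ?_)
    (tendsto_nhdsWithin_iff.2 ⟨hg, .of_forall fun k => ⟨⟨k, rfl⟩, hne k⟩⟩)
  obtain ⟨N, hN⟩ := mem_atTop_sets.1 (mem_map.1 hS)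
  -- Near `a`, the range of `g` avoids the finitely many values `g k ≠ a` with `k < N`.
  have hfar : (g '' Iio N \ {a})ᶜ ∈ 𝓝 a :=
    (((finite_Iio N).image g).sdiff.isClosed).isOpen_compl.mem_nhds fun h => h.2 rfl
  filter_upwards [inter_mem_nhdsWithin _ hfar] with x hx
  obtain ⟨⟨⟨k, rfl⟩, hka⟩, hk⟩ := hx
  exact hN k (not_lt.1 fun hkN => hk ⟨⟨k, hkN, rfl⟩, hka⟩)

theorem tsRho_eq_of_isLeast {T : Set ℝ} {a : ℝ} (h : IsLeast T a) : tsRho T a = a := by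
  have hempty : ¬ {s | s ∈ T ∧ s < a}.Nonempty := fun ⟨s, hs, hsa⟩ => (h.2 hs).not_gt hsa
  rw [tsRho, if_neg hempty, h.csInf_eq]

theorem tsSigma_eq_of_isGLB {T : Set ℝ} {t b : ℝ} (hne : {s | s ∈ T ∧ t < s}.Nonempty)
    (h : IsGLB {s | s ∈ T ∧ t < s} b) : tsSigma T t = b := by
  rw [tsSigma, if_pos hne, h.csInf_eq hne]

theorem tsSigma_eq_of_isLeast {T : Set ℝ} {t b : ℝ} (h : IsLeast {s | s ∈ T ∧ t < s} b) :
    tsSigma T t = b :=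
  tsSigma_eq_of_isGLB ⟨b, h.1⟩ h.isGLB

theorem antitone_one_div_factorial : Antitone fun k : ℕ => 1 / (k ! : ℝ) :=
  fun _ _ hjk => one_div_le_one_div_of_le (by positivity) (by exact_mod_cast factorial_le hjk)

theorem one_div_factorial_succ_lt {k : ℕ} (hk : 0 < k) : 1 / ((k + 1)! : ℝ) < 1 / (k ! : ℝ) :=
  one_div_lt_one_div_of_lt (by positivity) (by exact_mod_cast factorial_lt_of_lt hk k.lt_succ_self)

theorem tendsto_one_div_factorial : Tendsto (fun k : ℕ => 1 / (k ! : ℝ)) atTop (𝓝 0) := by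
  simpa using FloorSemiring.tendsto_pow_div_factorial_atTop (1 : ℝ)

noncomputable def invFactorials : Set ℝ := insert 0 (range fun k : ℕ => 1 / (k ! : ℝ))

theorem isLeast_invFactorials : IsLeast invFactorials 0 := by
  refine ⟨mem_insert _ _, ?_⟩
  rintro _ (rfl | ⟨k, rfl⟩)
  exacts [le_rfl, by positivity]

theorem nhdsWithin_invFactorials_diff_zero :
    𝓝[invFactorials \ {0}] (0 : ℝ) = map (fun k : ℕ => 1 / (k ! : ℝ)) atTop := by
  rw [invFactorials, insert_sdiff_of_mem _ (mem_singleton 0)]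
  exact nhdsWithin_range_diff_eq_map_atTop tendsto_one_div_factorial fun k => by positivity

theorem tsSigma_invFactorials_zero : tsSigma invFactorials 0 = 0 := by
  have hmem (k : ℕ) : 1 / (k ! : ℝ) ∈ {s | s ∈ invFactorials ∧ 0 < s} :=
    ⟨mem_insert_of_mem _ ⟨k, rfl⟩, by positivity⟩
  exact tsSigma_eq_of_isGLB ⟨_, hmem 0⟩ ⟨fun _ hs => hs.2.le,
    fun _ hb => ge_of_tendsto' tendsto_one_div_factorial fun k => hb (hmem k)⟩

theorem tsSigma_invFactorials_one_div_factorial_succ {k : ℕ} (hk : 0 < k) :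
    tsSigma invFactorials (1 / ((k + 1)! : ℝ)) = 1 / (k ! : ℝ) := by
  refine tsSigma_eq_of_isLeast ⟨⟨mem_insert_of_mem _ ⟨k, rfl⟩, one_div_factorial_succ_lt hk⟩, ?_⟩
  rintro _ ⟨rfl | ⟨j, rfl⟩, hlt⟩
  · exact absurd hlt (not_lt.2 (by positivity))
  · exact antitone_one_div_factorial (Nat.lt_succ_iff.1 (antitone_one_div_factorial.reflect_lt hlt))

theorem tendsto_tsSigma_invFactorials_div_atTop :
    Tendsto (fun s => tsSigma invFactorials s / s) (𝓝[invFactorials \ {0}] 0) atTop := by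
  rw [nhdsWithin_invFactorials_diff_zero, tendsto_map'_iff]
  refine tendsto_natCast_atTop_atTop.congr' ?_
  filter_upwards [eventually_ge_atTop 2] with k hk
  obtain ⟨k, rfl⟩ := Nat.exists_eq_add_of_le' hk
  rw [Function.comp_apply, tsSigma_invFactorials_one_div_factorial_succ (by omega),
    factorial_succ (k + 1)]
  push_cast
  field_simp
  ring

/-- For `T = {0} ∪ {1/k! : k ∈ ℕ}`, `σ` is not ∇-differentiable at `0`:
the limit of `σ(s)/s` as `s → 0` along `T \ {0}` does not exist in `ℝ` (it tends to `+∞`). -/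
theorem stmt_14 :
    (¬ ∃ L : ℝ, HasNablaDerivAt (insert 0 (Set.range fun k : ℕ => 1 / (k.factorial : ℝ)))
        (tsSigma (insert 0 (Set.range fun k : ℕ => 1 / (k.factorial : ℝ)))) 0 L) ∧
    Filter.Tendsto
      (fun s => tsSigma (insert 0 (Set.range fun k : ℕ => 1 / (k.factorial : ℝ))) s / s)
      (nhdsWithin 0 (insert 0 (Set.range fun k : ℕ => 1 / (k.factorial : ℝ)) \ {0}))
      Filter.atTop := by
  change (¬ ∃ L : ℝ, HasNablaDerivAt invFactorials (tsSigma invFactorials) 0 L) ∧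
    Tendsto (fun s => tsSigma invFactorials s / s) (𝓝[invFactorials \ {0}] 0) atTop
  refine ⟨fun ⟨L, hL⟩ => ?_, tendsto_tsSigma_invFactorials_div_atTop⟩
  rw [HasNablaDerivAt, tsRho_eq_of_isLeast isLeast_invFactorials, tsSigma_invFactorials_zero] at hL
  have : (𝓝[invFactorials \ {0}] (0 : ℝ)).NeBot := nhdsWithin_invFactorials_diff_zero ▸ map_neBot
  refine not_tendsto_nhds_of_tendsto_atTop tendsto_tsSigma_invFactorials_div_atTop L ?_
  simpa [div_eq_inv_mul] using hL
end
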